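/- arXiv:0803.3060 — 3 statements merged into one kernel-verified Lean document; each statement's English description precedes it below -/
import Mathlib

section
/- Let n ≥ 1 and d ≥ 1. For each h > 0 let U(h) be a unitary complex matrix of size n(d+1), viewed as a (d+1)×(d+1) block matrix with n×n blocks U_{ji}(h) for i,j ∈ {0,…,d} (so that U(h)(η⊗e_0) = Σ_j U_{j0}(h)η ⊗ e_j for the standard basis (e_i) of ℂ^{d+1}). Suppose there exist n×n matrices K and L_1,…,L_d such that, as h → 0⁺, (U_{00}(h) − I − hK)/h → 0 and, for each i ∈ {1,…,d}, (U_{i0}(h) − √h·L_i)/√h → 0. Then there exists a Hermitian n×n matrix H₀ such that for every n×n matrix X, lim_{h→0⁺} ( (Σ_{i=0}^d U_{i0}(h)* X U_{i0}(h)) − X ) / h = i[H₀, X] + (1/2)Σ_{i=1}^d ( 2 L_i* X L_i − X L_i* L_i − L_i* L_i X ), where [A,B] = AB − BA. -/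
/-!
Write `U₀₀(h) = 1 + h M(h)` and `U_{i0}(h) = √h Nᵢ(h)` with `M → K`, `Nᵢ → Lᵢ`. Expanding,
`(Σᵢ U_{i0}ᴴ X U_{i0} − X)/h = MᴴX + XM + h MᴴXM + Σᵢ NᵢᴴXNᵢ → KᴴX + XK + Σᵢ LᵢᴴXLᵢ`.
Since the first block column of a unitary is an isometry, the left side vanishes for `X = 1`,
which gives `Kᴴ + K + Σᵢ LᵢᴴLᵢ = 0`. With `H₀ = (i/2)(K − Kᴴ)` this identity turns the limit
into the Lindblad form.
-/

open Matrix Filter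
open scoped Topology

theorem Matrix.sum_conjTranspose_mul_block_eq_one {R m κ : Type*} [Semiring R] [StarRing R]
    [Fintype m] [DecidableEq m] [Fintype κ] [DecidableEq κ]
    {U : Matrix (m × κ) (m × κ) R} (hU : Uᴴ * U = 1) (i : κ) :
    ∑ j, (of fun a b => U (a, j) (b, i))ᴴ * (of fun a b => U (a, j) (b, i)) = 1 := by
  ext a b
  have hab := congr_fun₂ hU (a, i) (b, i)
  simp only [mul_apply, conjTranspose_apply, Fintype.sum_prod_type] at hab
  simp only [sum_apply, mul_apply, conjTranspose_apply, of_apply]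
  rw [Finset.sum_comm, hab]
  simp [one_apply]

lemma Filter.Tendsto.exists_tendsto_eq_smul {α M : Type*} [AddCommGroup M] [Module ℂ M]
    [TopologicalSpace M] [ContinuousAdd M] {l : Filter α} {c : α → ℂ} {w : α → M} {v : M}
    (h : Tendsto (fun x => (c x)⁻¹ • (w x - c x • v)) l (𝓝 0)) (hc : ∀ᶠ x in l, c x ≠ 0) :
    ∃ N : α → M, Tendsto N l (𝓝 v) ∧ ∀ᶠ x in l, w x = c x • N x := by
  refine ⟨fun x => v + (c x)⁻¹ • (w x - c x • v), by simpa using tendsto_const_nhds.add h, ?_⟩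
  filter_upwards [hc] with x hx
  rw [smul_add, smul_inv_smul₀ hx, add_sub_cancel]

lemma tendsto_ofReal_nhdsGT_zero : Tendsto (fun h : ℝ => (h : ℂ)) (𝓝[>] 0) (𝓝 0) :=
  (Complex.continuous_ofReal.tendsto' 0 0 Complex.ofReal_zero).mono_left nhdsWithin_le_nhds

lemma eventually_ofReal_ne_zero_nhdsGT_zero : ∀ᶠ h : ℝ in 𝓝[>] 0, (h : ℂ) ≠ 0 :=
  eventually_nhdsWithin_of_forall fun _ hh => Complex.ofReal_ne_zero.mpr (ne_of_gt hh)

lemma eventually_ofReal_sqrt_ne_zero_nhdsGT_zero : ∀ᶠ h : ℝ in 𝓝[>] 0, (√h : ℂ) ≠ 0 :=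
  eventually_nhdsWithin_of_forall fun _ hh =>
    Complex.ofReal_ne_zero.mpr (Real.sqrt_pos.mpr hh).ne'

section Limits

variable {m : Type*} [Fintype m]

lemma conjTranspose_one_add_ofReal_smul_mul_mul_sub [DecidableEq m] (t : ℝ)
    (M X : Matrix m m ℂ) :
    (1 + (t : ℂ) • M)ᴴ * X * (1 + (t : ℂ) • M) - X
      = (t : ℂ) • (Mᴴ * X + X * M + (t : ℂ) • (Mᴴ * X * M)) := by
  rw [conjTranspose_add, conjTranspose_one, conjTranspose_smul, Complex.star_def,
    Complex.conj_ofReal]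
  simp only [add_mul, mul_add, one_mul, mul_one, smul_mul_assoc, Matrix.mul_smul, smul_add,
    smul_smul]
  abel

lemma conjTranspose_ofReal_sqrt_smul_mul_mul {t : ℝ} (ht : 0 ≤ t) (M X : Matrix m m ℂ) :
    ((√t : ℂ) • M)ᴴ * X * ((√t : ℂ) • M) = (t : ℂ) • (Mᴴ * X * M) := by
  rw [conjTranspose_smul, Complex.star_def, Complex.conj_ofReal, smul_mul_assoc,
    Matrix.mul_smul, smul_mul_assoc, smul_smul, ← Complex.ofReal_mul, Real.mul_self_sqrt ht]

lemma tendsto_inv_smul_conjTranspose_mul_mul_sub_self [DecidableEq m] {A : ℝ → Matrix m m ℂ}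
    {K : Matrix m m ℂ}
    (hA : Tendsto (fun h : ℝ => (h : ℂ)⁻¹ • (A h - 1 - (h : ℂ) • K)) (𝓝[>] 0) (𝓝 0))
    (X : Matrix m m ℂ) :
    Tendsto (fun h : ℝ => (h : ℂ)⁻¹ • ((A h)ᴴ * X * A h - X)) (𝓝[>] 0) (𝓝 (Kᴴ * X + X * K)) := by
  obtain ⟨M, hM, hAM⟩ := hA.exists_tendsto_eq_smul (w := fun h => A h - 1)
    eventually_ofReal_ne_zero_nhdsGT_zero
  have hlim : Tendsto (fun h : ℝ => (M h)ᴴ * X + X * M h + (h : ℂ) • ((M h)ᴴ * X * M h))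
      (𝓝[>] 0) (𝓝 (Kᴴ * X + X * K)) := by
    have hMH : Tendsto (fun h => (M h)ᴴ) (𝓝[>] 0) (𝓝 Kᴴ) := hM.star
    simpa using ((hMH.mul_const X).add (hM.const_mul X)).add
      (tendsto_ofReal_nhdsGT_zero.smul ((hMH.mul_const X).mul hM))
  refine hlim.congr' ?_
  filter_upwards [hAM, eventually_ofReal_ne_zero_nhdsGT_zero] with h hAh hh
  rw [eq_add_of_sub_eq' hAh, conjTranspose_one_add_ofReal_smul_mul_mul_sub, inv_smul_smul₀ hh]

lemma tendsto_inv_smul_conjTranspose_mul_mul {B : ℝ → Matrix m m ℂ} {L : Matrix m m ℂ}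
    (hB : Tendsto (fun h : ℝ => (√h : ℂ)⁻¹ • (B h - (√h : ℂ) • L)) (𝓝[>] 0) (𝓝 0))
    (X : Matrix m m ℂ) :
    Tendsto (fun h : ℝ => (h : ℂ)⁻¹ • ((B h)ᴴ * X * B h)) (𝓝[>] 0) (𝓝 (Lᴴ * X * L)) := by
  obtain ⟨N, hN, hBN⟩ := hB.exists_tendsto_eq_smul eventually_ofReal_sqrt_ne_zero_nhdsGT_zero
  refine ((hN.star.mul_const X).mul hN).congr' ?_
  filter_upwards [hBN, eventually_ofReal_ne_zero_nhdsGT_zero, self_mem_nhdsWithin]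
    with h hBh hh (hpos : 0 < h)
  rw [hBh, conjTranspose_ofReal_sqrt_smul_mul_mul hpos.le, inv_smul_smul₀ hh]
  rfl

lemma tendsto_inv_smul_sum_conjTranspose_mul_mul_sub_self [DecidableEq m] {d : ℕ}
    {C : Fin (d + 1) → ℝ → Matrix m m ℂ} {K : Matrix m m ℂ} {L : Fin d → Matrix m m ℂ}
    (hK : Tendsto (fun h : ℝ => (h : ℂ)⁻¹ • (C 0 h - 1 - (h : ℂ) • K)) (𝓝[>] 0) (𝓝 0))
    (hL : ∀ i : Fin d,
      Tendsto (fun h : ℝ => (√h : ℂ)⁻¹ • (C i.succ h - (√h : ℂ) • L i)) (𝓝[>] 0) (𝓝 0))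
    (X : Matrix m m ℂ) :
    Tendsto (fun h : ℝ => (h : ℂ)⁻¹ • ((∑ i, (C i h)ᴴ * X * C i h) - X)) (𝓝[>] 0)
      (𝓝 (Kᴴ * X + X * K + ∑ i, (L i)ᴴ * X * L i)) := by
  refine ((tendsto_inv_smul_conjTranspose_mul_mul_sub_self hK X).add
    (tendsto_finsetSum _ fun i _ => tendsto_inv_smul_conjTranspose_mul_mul (hL i) X)).congr
    fun h => ?_
  rw [Fin.sum_univ_succ, ← Finset.smul_sum, ← smul_add, add_sub_right_comm]

end Limits

lemma isHermitian_I_div_two_smul_sub_conjTranspose {m : Type*} (K : Matrix m m ℂ) :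
    ((Complex.I / 2) • (K - Kᴴ)).IsHermitian := by
  rw [IsHermitian, conjTranspose_smul, conjTranspose_sub, conjTranspose_conjTranspose,
    Complex.star_def, map_div₀, Complex.conj_I, map_ofNat, ← neg_sub, smul_neg, neg_div,
    neg_smul, neg_neg]

lemma lindblad_eq_of_sum_eq_zero {m ι : Type*} [Fintype m] [Fintype ι] {K : Matrix m m ℂ}
    {L : ι → Matrix m m ℂ}
    (hS : Kᴴ + K + ∑ i, (L i)ᴴ * L i = 0) (X : Matrix m m ℂ) :
    Complex.I • (((Complex.I / 2) • (K - Kᴴ)) * X - X * ((Complex.I / 2) • (K - Kᴴ)))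
      + (1 / 2 : ℂ) • ∑ i, (2 • ((L i)ᴴ * X * L i) - X * (L i)ᴴ * L i - (L i)ᴴ * L i * X)
      = Kᴴ * X + X * K + ∑ i, (L i)ᴴ * X * L i := by
  have hLL : ∑ i, (L i)ᴴ * L i = -(Kᴴ + K) := eq_neg_of_add_eq_zero_right hS
  have hsum : ∑ i, (2 • ((L i)ᴴ * X * L i) - X * (L i)ᴴ * L i - (L i)ᴴ * L i * X)
      = 2 • ∑ i, (L i)ᴴ * X * L i + X * (Kᴴ + K) + (Kᴴ + K) * X := by
    simp only [Finset.sum_sub_distrib, ← Finset.smul_sum, mul_assoc X, ← Finset.mul_sum,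
      ← Finset.sum_mul, hLL, mul_neg, neg_mul, sub_neg_eq_add]
  have hI : Complex.I * (Complex.I / 2) = -(1 / 2) := by
    rw [mul_div_assoc', Complex.I_mul_I, neg_div]
  rw [hsum, smul_mul_assoc, Matrix.mul_smul, ← smul_sub, smul_smul, hI]
  simp only [sub_mul, mul_sub, add_mul, mul_add]
  module

theorem repeated_interaction_lindblad_general (n d : ℕ)
    (U : ℝ → Matrix (Fin n × Fin (d + 1)) (Fin n × Fin (d + 1)) ℂ)
    (hU : ∀ h : ℝ, 0 < h → U h ∈ Matrix.unitaryGroup (Fin n × Fin (d + 1)) ℂ)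
    (blk : ℝ → Fin (d + 1) → Fin (d + 1) → Matrix (Fin n) (Fin n) ℂ)
    (hblk : ∀ (h : ℝ) (j i : Fin (d + 1)), blk h j i = Matrix.of fun a b => U h (a, j) (b, i))
    (K : Matrix (Fin n) (Fin n) ℂ) (L : Fin d → Matrix (Fin n) (Fin n) ℂ)
    (hK : Tendsto (fun h : ℝ => (h : ℂ)⁻¹ • (blk h 0 0 - 1 - (h : ℂ) • K))
      (𝓝[>] (0 : ℝ)) (𝓝 0))
    (hL : ∀ i : Fin d,
      Tendsto (fun h : ℝ => ((Real.sqrt h : ℂ))⁻¹ •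
          (blk h i.succ 0 - (Real.sqrt h : ℂ) • L i))
        (𝓝[>] (0 : ℝ)) (𝓝 0)) :
    ∃ H0 : Matrix (Fin n) (Fin n) ℂ, H0.IsHermitian ∧
      ∀ X : Matrix (Fin n) (Fin n) ℂ,
        Tendsto (fun h : ℝ => (h : ℂ)⁻¹ •
            ((∑ i : Fin (d + 1), (blk h i 0)ᴴ * X * blk h i 0) - X))
          (𝓝[>] (0 : ℝ))
          (𝓝 (Complex.I • (H0 * X - X * H0) +
            (1 / 2 : ℂ) • ∑ i : Fin d,
              (2 • ((L i)ᴴ * X * L i) - X * (L i)ᴴ * L i - (L i)ᴴ * L i * X))) := by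
  have hlim := tendsto_inv_smul_sum_conjTranspose_mul_mul_sub_self
    (C := fun i h => blk h i 0) hK hL
  have hS : Kᴴ + K + ∑ i, (L i)ᴴ * L i = 0 := by
    have hiso : ∀ᶠ h in 𝓝[>] (0 : ℝ), ∑ i, (blk h i 0)ᴴ * blk h i 0 = 1 :=
      eventually_nhdsWithin_of_forall fun h hh => by
        simpa only [hblk] using
          sum_conjTranspose_mul_block_eq_one (mem_unitaryGroup_iff'.mp (hU h hh)) 0
    have h0 : Tendsto (fun h : ℝ => (h : ℂ)⁻¹ • (∑ i, (blk h i 0)ᴴ * 1 * blk h i 0 - 1))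
        (𝓝[>] 0) (𝓝 0) :=
      tendsto_const_nhds.congr' (hiso.mono fun h hh => by simp [hh])
    simpa using tendsto_nhds_unique (hlim 1) h0
  refine ⟨(Complex.I / 2) • (K - Kᴴ), isHermitian_I_div_two_smul_sub_conjTranspose K,
    fun X => ?_⟩
  rw [lindblad_eq_of_sum_eq_zero hS]
  exact hlim X

/-- Repeated-interaction limit theorem ([AP]): if the blocks of the unitaries `U(h)`
(in the block decomposition over `ℂ^n ⊗ ℂ^{d+1}`) satisfy
`U₀₀(h) = I + hK + o(h)` and `U_{i0}(h) = √h Lᵢ + o(√h)`, then there is a Hermitian `H₀`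
with `lim_{h→0⁺} (Σᵢ U_{i0}(h)* X U_{i0}(h) − X)/h
  = i[H₀,X] + ½ Σᵢ (2Lᵢ*XLᵢ − XLᵢ*Lᵢ − Lᵢ*LᵢX)` for every `X`. -/
theorem repeated_interaction_lindblad (n d : ℕ) (hn : 1 ≤ n) (hd : 1 ≤ d)
    (U : ℝ → Matrix (Fin n × Fin (d + 1)) (Fin n × Fin (d + 1)) ℂ)
    (hU : ∀ h : ℝ, 0 < h → U h ∈ Matrix.unitaryGroup (Fin n × Fin (d + 1)) ℂ)
    (blk : ℝ → Fin (d + 1) → Fin (d + 1) → Matrix (Fin n) (Fin n) ℂ)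
    (hblk : ∀ (h : ℝ) (j i : Fin (d + 1)), blk h j i = Matrix.of fun a b => U h (a, j) (b, i))
    (K : Matrix (Fin n) (Fin n) ℂ) (L : Fin d → Matrix (Fin n) (Fin n) ℂ)
    (hK : Tendsto (fun h : ℝ => (h : ℂ)⁻¹ • (blk h 0 0 - 1 - (h : ℂ) • K))
      (𝓝[>] (0 : ℝ)) (𝓝 0))
    (hL : ∀ i : Fin d,
      Tendsto (fun h : ℝ => ((Real.sqrt h : ℂ))⁻¹ •
          (blk h i.succ 0 - (Real.sqrt h : ℂ) • L i))
        (𝓝[>] (0 : ℝ)) (𝓝 0)) :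
    ∃ H0 : Matrix (Fin n) (Fin n) ℂ, H0.IsHermitian ∧
      ∀ X : Matrix (Fin n) (Fin n) ℂ,
        Tendsto (fun h : ℝ => (h : ℂ)⁻¹ •
            ((∑ i : Fin (d + 1), (blk h i 0)ᴴ * X * blk h i 0) - X))
          (𝓝[>] (0 : ℝ))
          (𝓝 (Complex.I • (H0 * X - X * H0) +
            (1 / 2 : ℂ) • ∑ i : Fin d,
              (2 • ((L i)ᴴ * X * L i) - X * (L i)ᴴ * L i - (L i)ᴴ * L i * X))) :=
  repeated_interaction_lindblad_general n d U hU blk hblk K L hK hL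
end

section
/- For every N ≥ 1, the total magnetization operator H^{(S)} := Σ_{k=1}^N σz^{(k)} commutes with the chain Hamiltonian H_S, i.e. H^{(S)}·H_S = H_S·H^{(S)} as 2^N×2^N matrices. -/
open Matrix Complex Filter
open scoped Kronecker Topology ComplexOrder

noncomputable section

/-- The `N`-spin configuration space index: `(ℂ²)^{⊗N}` is identified with
functions `Fin N → Fin 2 → ℂ`, so `2^N × 2^N` matrices are indexed by `Fin N → Fin 2`. -/
abbrev Spin (N : ℕ) := Fin N → Fin 2

def sx : Matrix (Fin 2) (Fin 2) ℂ := !![0, 1; 1, 0]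
def sy : Matrix (Fin 2) (Fin 2) ℂ := !![0, -Complex.I; Complex.I, 0]
def sz : Matrix (Fin 2) (Fin 2) ℂ := !![1, 0; 0, -1]
def sp : Matrix (Fin 2) (Fin 2) ℂ := !![0, 1; 0, 0]
def sm : Matrix (Fin 2) (Fin 2) ℂ := !![0, 0; 1, 0]
def np : Matrix (Fin 2) (Fin 2) ℂ := !![1, 0; 0, 0]
def nm : Matrix (Fin 2) (Fin 2) ℂ := !![0, 0; 0, 1]

/-- `M^{(k)} = I ⊗ ... ⊗ M ⊗ ... ⊗ I`: the 2×2 matrix `M` acting at site `k`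
of the chain, under the iterated Kronecker identification. -/
def site {N : ℕ} (k : Fin N) (M : Matrix (Fin 2) (Fin 2) ℂ) :
    Matrix (Spin N) (Spin N) ℂ :=
  Matrix.of fun x y => ∏ j : Fin N, if j = k then M (x j) (y j) else if x j = y j then 1 else 0

/-- The XY spin-chain Hamiltonian
`H_S = Σ_{k=1}^N σz^{(k)} + Σ_{k=1}^{N-1} (σx^{(k)}σx^{(k+1)} + σy^{(k)}σy^{(k+1)})`. -/
def HS (N : ℕ) : Matrix (Spin N) (Spin N) ℂ :=
  (∑ k : Fin N, site k sz) +
    ∑ k : Fin N, ∑ l : Fin N,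
      if (l : ℕ) = (k : ℕ) + 1 then site k sx * site l sx + site k sy * site l sy else 0

/-- `β₀ = e^{-β}/(e^{-β}+e^{β})`. -/
def b0 (β : ℝ) : ℝ := Real.exp (-β) / (Real.exp (-β) + Real.exp β)

/-- `β₁ = e^{β}/(e^{-β}+e^{β})`. -/
def b1 (β : ℝ) : ℝ := Real.exp β / (Real.exp (-β) + Real.exp β)

/-- The single-spin Gibbs state `ρ_β = diag(β₀, β₁)`. -/
def rhoB (β : ℝ) : Matrix (Fin 2) (Fin 2) ℂ := !![(b0 β : ℂ), 0; 0, (b1 β : ℂ)]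

/-- Heisenberg-picture dissipator at site `k`, inverse temperature `β`:
`2β₀(2σ₋^{(k)}Xσ₊^{(k)} − {n₋^{(k)},X}) + 2β₁(2σ₊^{(k)}Xσ₋^{(k)} − {n₊^{(k)},X})`. -/
def dissAt {N : ℕ} (k : Fin N) (β : ℝ) (X : Matrix (Spin N) (Spin N) ℂ) :
    Matrix (Spin N) (Spin N) ℂ :=
  (2 * b0 β : ℂ) • (2 • (site k sm * X * site k sp) - (site k nm * X + X * site k nm)) +
    (2 * b1 β : ℂ) • (2 • (site k sp * X * site k sm) - (site k np * X + X * site k np))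

/-- Schrödinger-picture (adjoint) dissipator at site `k`:
`2β₀(2σ₊^{(k)}ρσ₋^{(k)} − {n₋^{(k)},ρ}) + 2β₁(2σ₋^{(k)}ρσ₊^{(k)} − {n₊^{(k)},ρ})`. -/
def dissStarAt {N : ℕ} (k : Fin N) (β : ℝ) (ρ : Matrix (Spin N) (Spin N) ℂ) :
    Matrix (Spin N) (Spin N) ℂ :=
  (2 * b0 β : ℂ) • (2 • (site k sp * ρ * site k sm) - (site k nm * ρ + ρ * site k nm)) +
    (2 * b1 β : ℂ) • (2 • (site k sm * ρ * site k sp) - (site k np * ρ + ρ * site k np))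

/-- The two-bath Lindblad generator (Heisenberg picture), baths at sites `k` and `l`. -/
def Ltwo {N : ℕ} (k l : Fin N) (β β' : ℝ) (X : Matrix (Spin N) (Spin N) ℂ) :
    Matrix (Spin N) (Spin N) ℂ :=
  Complex.I • (HS N * X - X * HS N) + dissAt k β X + dissAt l β' X

/-- The two-bath adjoint Lindblad generator, baths at sites `k` and `l`. -/
def LtwoStar {N : ℕ} (k l : Fin N) (β β' : ℝ) (ρ : Matrix (Spin N) (Spin N) ℂ) :
    Matrix (Spin N) (Spin N) ℂ :=
  (-Complex.I) • (HS N * ρ - ρ * HS N) + dissStarAt k β ρ + dissStarAt l β' ρ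

/-- The `N`-fold Kronecker product `ρ_β ⊗ ... ⊗ ρ_β` under the iterated-Kronecker
identification. -/
def prodState (N : ℕ) (β : ℝ) : Matrix (Spin N) (Spin N) ℂ :=
  Matrix.of fun x y => ∏ j : Fin N, rhoB β (x j) (y j)

/-- A density matrix: Hermitian positive semidefinite with trace 1. -/
def IsDensityMatrix {n : Type*} [Fintype n] [DecidableEq n] (ρ : Matrix n n ℂ) : Prop :=
  ρ.IsHermitian ∧ ρ.PosSemidef ∧ ρ.trace = 1

/-!
H_S is the magnetization plus the hopping terms σx^{(k)}σx^{(l)} + σy^{(k)}σy^{(l)} with l = k + 1,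
so it suffices that each hopping term commutes with Σ_m σz^{(m)}. For m ≠ k, l, σz^{(m)} acts on
another tensor factor. For the remaining two, σzσx = iσy and σzσy = -iσx give, writing σaσb for
σa^{(k)}σb^{(l)}, (σz^{(k)} + σz^{(l)})(σxσx + σyσy) = i(σyσx + σxσy - σxσy - σyσx) = 0, and
symmetrically (σxσx + σyσy)(σz^{(k)} + σz^{(l)}) = 0.
-/

section TensorPi

variable {ι α R : Type*} [Fintype ι] [DecidableEq ι] [Fintype α] [CommSemiring R]

def tensorPi (f : ι → Matrix α α R) : Matrix (ι → α) (ι → α) R :=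
  Matrix.of fun x y => ∏ i, f i (x i) (y i)

theorem tensorPi_mul (f g : ι → Matrix α α R) :
    tensorPi f * tensorPi g = tensorPi (f * g) := by
  ext x y
  simp only [tensorPi, mul_apply, of_apply, Pi.mul_apply, ← Finset.prod_mul_distrib]
  exact (Fintype.prod_sum fun i z => f i (x i) z * g i z (y i)).symm

theorem Commute.tensorPi {f g : ι → Matrix α α R} (h : Commute f g) :
    Commute (tensorPi f) (tensorPi g) := by
  rw [commute_iff_eq, tensorPi_mul, tensorPi_mul, h.eq]

end TensorPi

section Site

variable {N : ℕ}

theorem site_eq_tensorPi (k : Fin N) (M : Matrix (Fin 2) (Fin 2) ℂ) :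
    site k M = tensorPi (Pi.mulSingle k M) := by
  ext x y
  simp only [site, tensorPi, of_apply]
  refine Finset.prod_congr rfl fun j _ => ?_
  by_cases h : j = k
  · simp [h]
  · simp [h, one_apply]

theorem site_mul_site (k : Fin N) (A B : Matrix (Fin 2) (Fin 2) ℂ) :
    site k A * site k B = site k (A * B) := by
  rw [site_eq_tensorPi, site_eq_tensorPi, tensorPi_mul, ← Pi.mulSingle_mul, site_eq_tensorPi]

theorem site_commute {k l : Fin N} (h : k ≠ l) (A B : Matrix (Fin 2) (Fin 2) ℂ) :
    Commute (site k A) (site l B) := by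
  rw [site_eq_tensorPi, site_eq_tensorPi]
  exact (Pi.mulSingle_commute (f := fun _ => Matrix (Fin 2) (Fin 2) ℂ) h A B).tensorPi

theorem site_one (k : Fin N) : site k 1 = 1 := by
  rw [site_eq_tensorPi, Pi.mulSingle_one]
  ext x y
  simp [tensorPi, one_apply, Fintype.prod_boole, funext_iff]

theorem site_smul (k : Fin N) (c : ℂ) (M : Matrix (Fin 2) (Fin 2) ℂ) :
    site k (c • M) = c • site k M := by
  ext x y
  simp only [site, of_apply, Matrix.smul_apply, smul_eq_mul, Fintype.prod_eq_mul_prod_compl k,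
    if_true, mul_assoc]
  congr 2
  refine Finset.prod_congr rfl fun j hj => ?_
  have hjk : j ≠ k := by simpa using hj
  rw [if_neg hjk, if_neg hjk]

theorem site_mul_site_mul_site_mul_site {k l : Fin N} (h : k ≠ l)
    (A B C D : Matrix (Fin 2) (Fin 2) ℂ) :
    site k A * site l B * (site k C * site l D) = site k (A * C) * site l (B * D) := by
  rw [(site_commute h C B).symm.mul_mul_mul_comm, site_mul_site, site_mul_site]

end Site

theorem sz_mul_sx : sz * sx = I • sy := by
  ext i j; fin_cases i <;> fin_cases j <;> simp [sz, sx, sy]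

theorem sx_mul_sz : sx * sz = -I • sy := by
  ext i j; fin_cases i <;> fin_cases j <;> simp [sz, sx, sy]

theorem sz_mul_sy : sz * sy = -I • sx := by
  ext i j; fin_cases i <;> fin_cases j <;> simp [sz, sx, sy]

theorem sy_mul_sz : sy * sz = I • sx := by
  ext i j; fin_cases i <;> fin_cases j <;> simp [sz, sx, sy]

def hopping {N : ℕ} (k l : Fin N) : Matrix (Spin N) (Spin N) ℂ :=
  site k sx * site l sx + site k sy * site l sy

theorem commute_site_sz_add_site_sz_hopping {N : ℕ} {k l : Fin N} (h : k ≠ l) :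
    Commute (site k sz + site l sz) (hopping k l) := by
  -- Written as products over the sites `k` and `l`, every term multiplies out factorwise.
  have hk : site k sz = site k sz * site l 1 := by rw [site_one, mul_one]
  have hl : site l sz = site k 1 * site l sz := by rw [site_one, one_mul]
  rw [commute_iff_eq, hopping, hk, hl]
  simp only [mul_add, add_mul, site_mul_site_mul_site_mul_site h, one_mul, mul_one, sz_mul_sx,
    sx_mul_sz, sz_mul_sy, sy_mul_sz, site_smul, smul_mul_assoc, mul_smul_comm]
  module

theorem commute_magnetization_hopping {N : ℕ} {k l : Fin N} (h : k ≠ l) :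
    Commute (∑ m : Fin N, site m sz) (hopping k l) := by
  rw [← Finset.sum_add_sum_compl {k, l}, Finset.sum_pair h]
  refine (commute_site_sz_add_site_sz_hopping h).add_left (.sum_left _ _ _ fun m hm => ?_)
  simp only [Finset.mem_compl, Finset.mem_insert, Finset.mem_singleton, not_or] at hm
  exact .add_right ((site_commute hm.1 _ _).mul_right (site_commute hm.2 _ _))
    ((site_commute hm.1 _ _).mul_right (site_commute hm.2 _ _))

theorem magnetization_commutes_with_HS_general (N : ℕ) :
    (∑ k : Fin N, site k sz) * HS N = HS N * ∑ k : Fin N, site k sz := by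
  refine Commute.eq <| (Commute.refl _).add_right <|
    .sum_right _ _ _ fun k _ => .sum_right _ _ _ fun l _ => ?_
  split_ifs with hl
  · exact commute_magnetization_hopping (Fin.ne_of_lt (by omega))
  · exact .zero_right _

/-- For every `N ≥ 1`, the total magnetization `H^{(S)} = Σ_k σz^{(k)}` commutes
with the chain Hamiltonian `H_S`. -/
theorem magnetization_commutes_with_HS (N : ℕ) (hN : 1 ≤ N) :
    (∑ k : Fin N, site k sz) * HS N = HS N * ∑ k : Fin N, site k sz :=
  magnetization_commutes_with_HS_general N
end
end

section
/- Fix N ≥ 2 and β ∈ ℝ, and take β′ = β in the two-bath adjoint Lindblad generator L*. Then the product state ρ^β := ρ_β⊗ρ_β⊗…⊗ρ_β (N factors) is stationary: L*(ρ^β) = 0. -/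
open Matrix Complex Filter
open scoped Kronecker Topology ComplexOrder

noncomputable section

/-! The product state is the Kronecker power `ρ_β^{⊗N}`, and an operator acting on one or two
sites multiplies it factorwise. Hence the dissipator at a bath site turns `ρ^β` into
`ρ_β ⊗ … ⊗ D(ρ_β) ⊗ … ⊗ ρ_β`, where `D` is the single-spin dissipator, and `D(ρ_β) = 0` is
detailed balance. The Hamiltonian commutes with `ρ^β`: `σz` commutes with `ρ_β`, and the hopping
term `σx ⊗ σx + σy ⊗ σy = 2 (σ₊ ⊗ σ₋ + σ₋ ⊗ σ₊)` conserves the total `σz`, of which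
`ρ_β ⊗ ρ_β` is a function. -/

namespace Matrix

open Function

variable {ι n R : Type*} [Fintype ι] [CommSemiring R]

lemma prod_update_apply [DecidableEq ι] (F : ι → Matrix n n R) (k : ι) (A : Matrix n n R)
    (x y : ι → n) :
    ∏ j, update F k A j (x j) (y j) =
      A (x k) (y k) * ∏ j ∈ Finset.univ.erase k, F j (x j) (y j) := by
  rw [← Finset.mul_prod_erase _ _ (Finset.mem_univ k), update_self]
  congr 1
  exact Finset.prod_congr rfl fun j hj => by rw [update_of_ne (Finset.ne_of_mem_erase hj)]

def kroneckerPi : MultilinearMap R (fun _ : ι => Matrix n n R) (Matrix (ι → n) (ι → n) R) where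
  toFun F := of fun x y => ∏ j, F j (x j) (y j)
  map_update_add' F k A B := by
    ext x y
    simp only [of_apply, add_apply, prod_update_apply, add_mul]
  map_update_smul' F k c A := by
    ext x y
    simp only [of_apply, smul_apply, prod_update_apply, smul_eq_mul, mul_assoc]

lemma kroneckerPi_apply (F : ι → Matrix n n R) (x y : ι → n) :
    kroneckerPi F x y = ∏ j, F j (x j) (y j) := rfl

lemma kroneckerPi_one [DecidableEq n] : kroneckerPi (1 : ι → Matrix n n R) = 1 := by
  ext x y
  simp only [kroneckerPi_apply, Pi.one_apply, one_apply, Finset.prod_boole, funext_iff,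
    Finset.mem_univ, true_implies]

variable [DecidableEq ι]

lemma kroneckerPi_mul [Fintype n] (F G : ι → Matrix n n R) :
    kroneckerPi F * kroneckerPi G = kroneckerPi (F * G) := by
  ext x y
  simp only [mul_apply, kroneckerPi_apply, Pi.mul_apply, Fintype.prod_sum]
  exact Finset.sum_congr rfl fun z _ => Finset.prod_mul_distrib.symm

lemma kroneckerPi_update_one_mul_mul [Fintype n] [DecidableEq n] (k : ι) (A B : Matrix n n R)
    (G : ι → Matrix n n R) :
    kroneckerPi (update 1 k A) * kroneckerPi G * kroneckerPi (update 1 k B) =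
      kroneckerPi (update G k (A * G k * B)) := by
  rw [kroneckerPi_mul, kroneckerPi_mul]
  congr 1
  ext1 j
  rcases eq_or_ne j k with rfl | h <;> simp [update_of_ne, *]

def kroneckerPiPair (k l : ι) (G : ι → Matrix n n R) (T : Matrix (n × n) (n × n) R) :
    Matrix (ι → n) (ι → n) R :=
  of fun x y => T (x k, x l) (y k, y l) * ∏ j ∈ (Finset.univ.erase l).erase k, G j (x j) (y j)

lemma kroneckerPiPair_add (k l : ι) (G : ι → Matrix n n R) (T T' : Matrix (n × n) (n × n) R) :
    kroneckerPiPair k l G (T + T') = kroneckerPiPair k l G T + kroneckerPiPair k l G T' := by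
  ext x y
  simp only [kroneckerPiPair, of_apply, add_apply, add_mul]

lemma kroneckerPi_update_update {k l : ι} (hkl : k ≠ l) (G : ι → Matrix n n R)
    (A B : Matrix n n R) :
    kroneckerPi (update (update G k A) l B) = kroneckerPiPair k l G (A ⊗ₖ B) := by
  ext x y
  rw [kroneckerPi_apply, prod_update_apply,
    ← Finset.mul_prod_erase _ _ (Finset.mem_erase.mpr ⟨hkl, Finset.mem_univ k⟩)]
  simp only [kroneckerPiPair, of_apply, kroneckerMap_apply, update_self]
  rw [← mul_assoc, mul_comm (B _ _)]
  congr 1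
  exact Finset.prod_congr rfl fun j hj => by rw [update_of_ne (Finset.ne_of_mem_erase hj)]

end Matrix

lemma sz_commute_rhoB (β : ℝ) : Commute sz (rhoB β) := by
  ext i j
  fin_cases i <;> fin_cases j <;> simp [mul_apply, Fin.sum_univ_two, sz, rhoB]

lemma hop_commute_rhoB_kronecker (β : ℝ) :
    Commute (sx ⊗ₖ sx + sy ⊗ₖ sy) (rhoB β ⊗ₖ rhoB β) := by
  ext ⟨a, b⟩ ⟨c, d⟩
  fin_cases a <;> fin_cases b <;> fin_cases c <;> fin_cases d <;>
    simp [mul_apply, Fintype.sum_prod_type, Fin.sum_univ_two, sx, sy, rhoB] <;> ring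

def dissStar (β : ℝ) (ρ : Matrix (Fin 2) (Fin 2) ℂ) : Matrix (Fin 2) (Fin 2) ℂ :=
  (2 * b0 β : ℂ) • (2 • (sp * ρ * sm) - (nm * ρ + ρ * nm)) +
    (2 * b1 β : ℂ) • (2 • (sm * ρ * sp) - (np * ρ + ρ * np))

lemma dissStar_rhoB (β : ℝ) : dissStar β (rhoB β) = 0 := by
  ext i j
  fin_cases i <;> fin_cases j <;>
    simp [dissStar, sp, sm, np, nm, rhoB] <;> ring

section Chain

open Function

variable {N : ℕ}

lemma site_eq_kroneckerPi (k : Fin N) (M : Matrix (Fin 2) (Fin 2) ℂ) :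
    site k M = kroneckerPi (update 1 k M) := by
  ext x y
  rw [site, of_apply, kroneckerPi_apply]
  refine Finset.prod_congr rfl fun j _ => ?_
  rcases eq_or_ne j k with rfl | h <;> simp [update_of_ne, Matrix.one_apply, *]

lemma prodState_eq_kroneckerPi (β : ℝ) :
    prodState N β = kroneckerPi (fun _ => rhoB β) := rfl

lemma site_mul_kroneckerPi_mul_site (k : Fin N) (A B : Matrix (Fin 2) (Fin 2) ℂ)
    (G : Fin N → Matrix (Fin 2) (Fin 2) ℂ) :
    site k A * kroneckerPi G * site k B = kroneckerPi (update G k (A * G k * B)) := by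
  rw [site_eq_kroneckerPi, site_eq_kroneckerPi, kroneckerPi_update_one_mul_mul]

lemma site_mul_kroneckerPi (k : Fin N) (A : Matrix (Fin 2) (Fin 2) ℂ)
    (G : Fin N → Matrix (Fin 2) (Fin 2) ℂ) :
    site k A * kroneckerPi G = kroneckerPi (update G k (A * G k)) := by
  simpa [site_eq_kroneckerPi, kroneckerPi_one] using site_mul_kroneckerPi_mul_site k A 1 G

lemma kroneckerPi_mul_site (k : Fin N) (B : Matrix (Fin 2) (Fin 2) ℂ)
    (G : Fin N → Matrix (Fin 2) (Fin 2) ℂ) :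
    kroneckerPi G * site k B = kroneckerPi (update G k (G k * B)) := by
  simpa [site_eq_kroneckerPi, kroneckerPi_one] using site_mul_kroneckerPi_mul_site k 1 B G

lemma site_mul_site_mul_kroneckerPi {k l : Fin N} (hkl : k ≠ l) (A B : Matrix (Fin 2) (Fin 2) ℂ)
    (G : Fin N → Matrix (Fin 2) (Fin 2) ℂ) :
    site k A * site l B * kroneckerPi G = kroneckerPiPair k l G ((A * G k) ⊗ₖ (B * G l)) := by
  rw [mul_assoc, site_mul_kroneckerPi, site_mul_kroneckerPi, update_of_ne hkl,
    update_comm hkl.symm, kroneckerPi_update_update hkl]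

lemma kroneckerPi_mul_site_mul_site {k l : Fin N} (hkl : k ≠ l) (A B : Matrix (Fin 2) (Fin 2) ℂ)
    (G : Fin N → Matrix (Fin 2) (Fin 2) ℂ) :
    kroneckerPi G * (site k A * site l B) = kroneckerPiPair k l G ((G k * A) ⊗ₖ (G l * B)) := by
  rw [← mul_assoc, kroneckerPi_mul_site, kroneckerPi_mul_site, update_of_ne hkl.symm,
    kroneckerPi_update_update hkl]

lemma dissStarAt_kroneckerPi (k : Fin N) (β : ℝ) (G : Fin N → Matrix (Fin 2) (Fin 2) ℂ) :
    dissStarAt k β (kroneckerPi G) = kroneckerPi (update G k (dissStar β (G k))) := by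
  rw [dissStarAt, site_mul_kroneckerPi_mul_site, site_mul_kroneckerPi_mul_site]
  simp only [dissStar, site_mul_kroneckerPi,
    kroneckerPi_mul_site, ← MultilinearMap.toLinearMap_apply, map_add, map_sub, map_smul,
    map_nsmul]

lemma dissStarAt_prodState (k : Fin N) (β : ℝ) : dissStarAt k β (prodState N β) = 0 := by
  rw [prodState_eq_kroneckerPi, dissStarAt_kroneckerPi, dissStar_rhoB,
    MultilinearMap.map_update_zero]

lemma hop_commute_prodState {k l : Fin N} (hkl : k ≠ l) (β : ℝ) :
    Commute (site k sx * site l sx + site k sy * site l sy) (prodState N β) := by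
  rw [Commute, SemiconjBy, add_mul, mul_add, prodState_eq_kroneckerPi,
    site_mul_site_mul_kroneckerPi hkl, site_mul_site_mul_kroneckerPi hkl,
    kroneckerPi_mul_site_mul_site hkl, kroneckerPi_mul_site_mul_site hkl, ← kroneckerPiPair_add,
    ← kroneckerPiPair_add, mul_kronecker_mul, mul_kronecker_mul, mul_kronecker_mul,
    mul_kronecker_mul, ← add_mul, ← mul_add, (hop_commute_rhoB_kronecker β).eq]

lemma site_sz_commute_prodState (k : Fin N) (β : ℝ) : Commute (site k sz) (prodState N β) := by
  rw [Commute, SemiconjBy, prodState_eq_kroneckerPi, site_mul_kroneckerPi, kroneckerPi_mul_site,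
    (sz_commute_rhoB β).eq]

lemma HS_commute_prodState (β : ℝ) : Commute (HS N) (prodState N β) := by
  refine .add_left (.sum_left _ _ _ fun k _ => site_sz_commute_prodState k β)
    (.sum_left _ _ _ fun k _ => .sum_left _ _ _ fun l _ => ?_)
  split_ifs with hlk
  · exact hop_commute_prodState (fun h => by omega) β
  · exact .zero_left _

lemma LtwoStar_prodState (k l : Fin N) (β : ℝ) : LtwoStar k l β β (prodState N β) = 0 := by
  rw [LtwoStar, (HS_commute_prodState β).eq, sub_self, smul_zero, zero_add,
    dissStarAt_prodState, dissStarAt_prodState, add_zero]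

end Chain

/-- At equal bath temperatures `β' = β`, the product state `ρ^β` is stationary
for the two-bath adjoint Lindblad generator (baths at sites `1` and `N`). -/
theorem prodState_stationary (N : ℕ) (hN : 2 ≤ N) (β : ℝ) :
    LtwoStar (⟨0, by omega⟩ : Fin N) (⟨N - 1, by omega⟩ : Fin N) β β (prodState N β) = 0 :=
  LtwoStar_prodState _ _ β
end
end
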